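/- Let U > 0, l > 0, and let ū : ℝ → [−U/2, U/2] be measurable and non-increasing with ∫_ℝ z (ū(z) − u₀(z)) dz = U l²/2, where u₀(z) = −U/2 for z ≥ 0 and u₀(z) = U/2 for z < 0. Then (1/U) ∫_ℝ u₀(z)(u₀(z) − ū(z)) dz ≤ U l / 2. -/

import Mathlib

/-!
Put `h = |ū - u₀|`; then `u₀ (u₀ - ū) = (U/2) h` and `z (ū - u₀) = |z| h`. Since `ū` is
non-increasing, `h ≤ α := U/2 + ū(0)` on `(0, ∞)` and `h ≤ β := U/2 - ū(0)` on `(-∞, 0)`,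
and `α + β = U`. On each half-line the bathtub principle gives `(∫ h)² ≤ 2α ∫ z h` (the
moment is smallest when the mass sits as close to the origin as the bound `α` allows), and
Cauchy–Schwarz glues the two halves into `(∫ h)² ≤ 2U ∫ |z| h = (U l)²`.
-/

open MeasureTheory

noncomputable section

/-- the reference (discontinuous) shear profile u₀ -/
def u0 (U z : ℝ) : ℝ := if 0 ≤ z then -U / 2 else U / 2

open Set

lemma integrable_of_norm_le_of_integrable_smul {E : Type*} [NormedAddCommGroup E]
    [NormedSpace ℝ E] {g : ℝ → E} {C : ℝ} (hg : AEStronglyMeasurable g)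
    (hC : ∀ z, ‖g z‖ ≤ C) (hmom : Integrable fun z => z • g z) : Integrable g := by
  have h_ind : Integrable ((Icc (-1 : ℝ) 1).indicator fun _ => C) :=
    (integrableOn_const measure_Icc_lt_top.ne).integrable_indicator measurableSet_Icc
  refine (h_ind.add hmom.norm).mono' hg (.of_forall fun z => ?_)
  by_cases hz : z ∈ Icc (-1 : ℝ) 1
  · simp only [Pi.add_apply, indicator_of_mem hz]
    linarith [hC z, norm_nonneg (z • g z)]
  · have h_one : 1 ≤ |z| := by
      rw [mem_Icc, ← abs_le, not_le] at hz
      exact hz.le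
    simp only [Pi.add_apply, indicator_of_notMem hz, norm_smul, Real.norm_eq_abs, zero_add]
    nlinarith [norm_nonneg (g z)]

lemma integral_eq_setIntegral_Ioi_add_comp_neg {E : Type*} [NormedAddCommGroup E]
    [NormedSpace ℝ E] {f : ℝ → E} (hf : Integrable f) :
    ∫ z, f z = (∫ z in Ioi 0, f z) + ∫ z in Ioi 0, f (-z) := by
  rw [integral_comp_neg_Ioi, neg_zero, add_comm (∫ z in Ioi 0, f z),
    intervalIntegral.integral_Iic_add_Ioi hf.integrableOn hf.integrableOn]

lemma setIntegral_Ioi_sub_mul_le {h : ℝ → ℝ} {α t : ℝ} (ht : 0 ≤ t)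
    (h_nonneg : ∀ z ∈ Ioi (0 : ℝ), 0 ≤ h z) (h_le : ∀ z ∈ Ioi (0 : ℝ), h z ≤ α)
    (hint : IntegrableOn h (Ioi 0)) (hmom : IntegrableOn (fun z => z * h z) (Ioi 0)) :
    ∫ z in Ioi 0, (t - z) * h z ≤ α * t ^ 2 / 2 := by
  have h_lhs : IntegrableOn (fun z => (t - z) * h z) (Ioi 0) :=
    IntegrableOn.congr_fun ((hint.const_mul t).sub hmom) (fun z _ => (sub_mul t z (h z)).symm)
      measurableSet_Ioi
  have h_tent : IntegrableOn ((Ioc 0 t).indicator fun z => α * (t - z)) (Ioi 0) :=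
    (((continuous_const.mul (continuous_const.sub continuous_id)).integrableOn_Icc).mono_set
      Ioc_subset_Icc_self).integrable_indicator measurableSet_Ioc |>.integrableOn
  calc ∫ z in Ioi 0, (t - z) * h z
      ≤ ∫ z in Ioi 0, (Ioc 0 t).indicator (fun z => α * (t - z)) z := by
        refine setIntegral_mono_on h_lhs h_tent measurableSet_Ioi fun z hz => ?_
        by_cases hzt : z ≤ t
        · rw [indicator_of_mem (s := Ioc 0 t) ⟨hz, hzt⟩, mul_comm α]
          exact mul_le_mul_of_nonneg_left (h_le z hz) (sub_nonneg.2 hzt)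
        · rw [indicator_of_notMem fun h => hzt h.2]
          exact mul_nonpos_of_nonpos_of_nonneg (by linarith) (h_nonneg z hz)
    _ = ∫ z in Ioc 0 t, α * (t - z) := by
        rw [setIntegral_indicator measurableSet_Ioc, inter_eq_right.2 Ioc_subset_Ioi_self]
    _ = α * t ^ 2 / 2 := by
        rw [← intervalIntegral.integral_of_le ht, intervalIntegral.integral_const_mul,
          intervalIntegral.integral_comp_sub_left (fun x => x), sub_self, sub_zero, integral_id]
        ring

lemma sq_setIntegral_Ioi_le {h : ℝ → ℝ} {α : ℝ}
    (h_nonneg : ∀ z ∈ Ioi (0 : ℝ), 0 ≤ h z) (h_le : ∀ z ∈ Ioi (0 : ℝ), h z ≤ α)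
    (hint : IntegrableOn h (Ioi 0)) (hmom : IntegrableOn (fun z => z * h z) (Ioi 0)) :
    (∫ z in Ioi 0, h z) ^ 2 ≤ 2 * α * ∫ z in Ioi 0, z * h z := by
  set A := ∫ z in Ioi 0, h z
  set M := ∫ z in Ioi 0, z * h z
  have hA : 0 ≤ A := setIntegral_nonneg measurableSet_Ioi h_nonneg
  have h_one : (1 : ℝ) ∈ Ioi 0 := mem_Ioi.2 one_pos
  rcases ((h_nonneg 1 h_one).trans (h_le 1 h_one)).eq_or_lt with hα | hα
  · have h_zero : A = 0 := setIntegral_eq_zero_of_forall_eq_zero fun z hz =>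
      le_antisymm (hα ▸ h_le z hz) (h_nonneg z hz)
    rw [h_zero, ← hα]
    simp
  · -- `A / α` is the length of the interval filled by the extremal profile `h = α` of mass `A`
    have key := setIntegral_Ioi_sub_mul_le (t := A / α) (by positivity) h_nonneg h_le hint hmom
    have h_split : ∫ z in Ioi 0, (A / α - z) * h z = A / α * A - M := by
      simp only [sub_mul]
      rw [integral_sub (hint.const_mul _) hmom, integral_const_mul]
    rw [h_split] at key
    field_simp at key
    linarith

lemma sq_add_le_mul_add_of_sq_le_mul {a b α β x y : ℝ} (hα : 0 ≤ α) (hβ : 0 ≤ β) (hx : 0 ≤ x)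
    (hy : 0 ≤ y) (ha : a ^ 2 ≤ α * x) (hb : b ^ 2 ≤ β * y) :
    (a + b) ^ 2 ≤ (α + β) * (x + y) := by
  have hab : (2 * (a * b)) ^ 2 ≤ (α * y + β * x) ^ 2 := by
    nlinarith [mul_le_mul ha hb (sq_nonneg b) (mul_nonneg hα hx), sq_nonneg (α * y - β * x)]
  nlinarith [abs_le_of_sq_le_sq' hab (by positivity)]

lemma sq_integral_le_mul_integral_abs_mul {h : ℝ → ℝ} {α β : ℝ} (h_nonneg : ∀ z, 0 ≤ h z)
    (h_pos : ∀ z, 0 < z → h z ≤ α) (h_neg : ∀ z, z < 0 → h z ≤ β)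
    (hint : Integrable h) (hmom : Integrable fun z => |z| * h z) :
    (∫ z, h z) ^ 2 ≤ 2 * (α + β) * ∫ z, |z| * h z := by
  have h_right := sq_setIntegral_Ioi_le (fun z _ => h_nonneg z) h_pos hint.integrableOn
    (hmom.integrableOn.congr_fun (fun z hz => by simp [abs_of_pos hz.out]) measurableSet_Ioi)
  have h_left := sq_setIntegral_Ioi_le (h := fun z => h (-z)) (fun z _ => h_nonneg _)
    (fun z hz => h_neg _ (neg_neg_of_pos hz)) hint.comp_neg.integrableOn
    (hmom.comp_neg.integrableOn.congr_fun (fun z hz => by simp [abs_of_pos hz.out])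
      measurableSet_Ioi)
  have h_mom_split : ∫ z, |z| * h z = (∫ z in Ioi 0, z * h z) + ∫ z in Ioi 0, z * h (-z) := by
    rw [integral_eq_setIntegral_Ioi_add_comp_neg hmom]
    congr 1 <;> refine setIntegral_congr_fun measurableSet_Ioi fun z hz => ?_ <;>
      simp [abs_of_pos hz.out]
  have hα : 0 ≤ α := (h_nonneg 1).trans (h_pos 1 one_pos)
  have hβ : 0 ≤ β := (h_nonneg (-1)).trans (h_neg (-1) (by norm_num))
  rw [integral_eq_setIntegral_Ioi_add_comp_neg hint, h_mom_split, mul_add 2 α β]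
  refine sq_add_le_mul_add_of_sq_le_mul (by positivity) (by positivity) ?_ ?_ h_right h_left
  all_goals exact setIntegral_nonneg measurableSet_Ioi fun z hz => mul_nonneg hz.out.le (h_nonneg _)

lemma antitone_u0 {U : ℝ} (hU : 0 ≤ U) : Antitone (u0 U) := by
  intro x y hxy
  unfold u0
  split_ifs <;> linarith

lemma abs_sub_u0_of_nonneg {U u z : ℝ} (hz : 0 ≤ z) (hu : -(U / 2) ≤ u) :
    |u - u0 U z| = u + U / 2 := by
  rw [u0, if_pos hz, abs_of_nonneg] <;> linarith

lemma abs_sub_u0_of_neg {U u z : ℝ} (hz : z < 0) (hu : u ≤ U / 2) :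
    |u - u0 U z| = U / 2 - u := by
  rw [u0, if_neg hz.not_ge, abs_of_nonpos] <;> linarith

lemma abs_sub_u0_le {U u : ℝ} (hu : u ∈ Icc (-(U / 2)) (U / 2)) (z : ℝ) :
    |u - u0 U z| ≤ U := by
  rcases le_or_gt 0 z with hz | hz
  · rw [abs_sub_u0_of_nonneg hz hu.1]; linarith [hu.2]
  · rw [abs_sub_u0_of_neg hz hu.2]; linarith [hu.1]

lemma u0_mul_u0_sub {U u : ℝ} (hu : u ∈ Icc (-(U / 2)) (U / 2)) (z : ℝ) :
    u0 U z * (u0 U z - u) = U / 2 * |u - u0 U z| := by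
  rcases le_or_gt 0 z with hz | hz
  · rw [abs_sub_u0_of_nonneg hz hu.1, u0, if_pos hz]; ring
  · rw [abs_sub_u0_of_neg hz hu.2, u0, if_neg hz.not_ge]

lemma mul_sub_u0 {U u : ℝ} (hu : u ∈ Icc (-(U / 2)) (U / 2)) (z : ℝ) :
    z * (u - u0 U z) = |z| * |u - u0 U z| := by
  rcases le_or_gt 0 z with hz | hz
  · rw [abs_sub_u0_of_nonneg hz hu.1, abs_of_nonneg hz, u0, if_pos hz]; ring
  · rw [abs_sub_u0_of_neg hz hu.2, abs_of_neg hz, u0, if_neg hz.not_ge]; ring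

theorem correlation_estimate_general
    (U l : ℝ) (hU : 0 < U) (hl : 0 < l)
    (ubar : ℝ → ℝ) (h_anti : Antitone ubar)
    (h_range : ∀ z : ℝ, ubar z ∈ Set.Icc (-(U/2)) (U/2))
    (h_mom_int : MeasureTheory.Integrable (fun z => z * (ubar z - u0 U z)))
    (h_mom : (∫ z : ℝ, z * (ubar z - u0 U z)) = U * l ^ 2 / 2) :
    (1 / U) * ∫ z : ℝ, u0 U z * (u0 U z - ubar z) ≤ U * l / 2 := by
  have h_mom_abs (z : ℝ) := mul_sub_u0 (h_range z) z
  have h_pos : ∀ z, 0 < z → |ubar z - u0 U z| ≤ U / 2 + ubar 0 := fun z hz => by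
    rw [abs_sub_u0_of_nonneg hz.le (h_range z).1]; linarith [h_anti hz.le]
  have h_neg : ∀ z, z < 0 → |ubar z - u0 U z| ≤ U / 2 - ubar 0 := fun z hz => by
    rw [abs_sub_u0_of_neg hz (h_range z).2]; linarith [h_anti hz.le]
  have h_int : Integrable fun z => ubar z - u0 U z := integrable_of_norm_le_of_integrable_smul
    (h_anti.measurable.sub (antitone_u0 hU.le).measurable).aestronglyMeasurable
    (fun z => abs_sub_u0_le (h_range z) z) h_mom_int
  have h_sq := sq_integral_le_mul_integral_abs_mul (fun z => abs_nonneg _) h_pos h_neg h_int.abs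
    (by simpa only [h_mom_abs] using h_mom_int)
  simp_rw [← h_mom_abs, h_mom, add_add_sub_cancel] at h_sq
  have h_mass : ∫ z, |ubar z - u0 U z| ≤ U * l :=
    (abs_le_of_sq_le_sq' (by linarith) (by positivity)).2
  have h_corr (z : ℝ) := u0_mul_u0_sub (h_range z) z
  simp_rw [h_corr, integral_const_mul]
  field_simp
  linarith

theorem correlation_estimate
    (U l : ℝ) (hU : 0 < U) (hl : 0 < l)
    (ubar : ℝ → ℝ) (h_meas : Measurable ubar) (h_anti : Antitone ubar)
    (h_range : ∀ z : ℝ, ubar z ∈ Set.Icc (-(U/2)) (U/2))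
    (h_mom_int : MeasureTheory.Integrable (fun z => z * (ubar z - u0 U z)))
    (h_mom : (∫ z : ℝ, z * (ubar z - u0 U z)) = U * l ^ 2 / 2) :
    (1 / U) * ∫ z : ℝ, u0 U z * (u0 U z - ubar z) ≤ U * l / 2 :=
  correlation_estimate_general U l hU hl ubar h_anti h_range h_mom_int h_mom

end
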